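/- arXiv:2105.14169 — 2 statements merged into one kernel-verified Lean document; each statement's English description precedes it below -/
import Mathlib

section
/- For permutations σ, ρ in S_n with ℓ(σρ) = ℓ(σ) + ℓ(ρ), when π_σ π̄_ρ is expanded in the basis {π_γ : γ ∈ S_n} of H_n(0), the element σρ is the unique element of maximal length among those γ for which π_γ appears with nonzero coefficient; moreover the coefficient of π_{σρ} is 1. -/
/-!
Let `H_n(0)` act on `ℂ[S_n]` by letting `π_i` send `e_γ` to `e_{s_i γ}` when `ℓ(s_i γ) > ℓ(γ)`
and fix `e_γ` otherwise (the Demazure product). Read on the one-line notation of `γ⁻¹`, `π_i`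
sorts the entries in positions `i, i+1` into decreasing order, so the defining relations become
identities between `max` and `min` (the braid relation computes a median in two ways).

In this representation `π_γ e_1 = e_γ`, so the `c γ` are the coordinates of `π_σ π̄_ρ e_1`.
Along a reduced word, `π̄_ρ e_1 = e_ρ + (terms of length < ℓ(ρ))`; then `π_σ` sends `e_ρ` to
`e_{σρ}` because `ℓ(σρ) = ℓ(σ) + ℓ(ρ)`, and raises lengths by at most `ℓ(σ)`. Hence
`π_σ π̄_ρ e_1 = e_{σρ} + (terms of length < ℓ(σρ))`.
-/

open scoped Classical

noncomputable section

/-- The symmetric group `S_{n+1}` (the paper's `S_n` with `n = n+1`). -/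
abbrev SG (n : ℕ) := Equiv.Perm (Fin (n + 1))

/-- The simple transposition `s_{i+1}` (adjacent transposition swapping `i` and `i+1`,
0-indexed). -/
def sgen {n : ℕ} (i : Fin n) : SG n := Equiv.swap i.castSucc i.succ

/-- Coxeter length of a permutation, i.e. its number of inversions. -/
def len {n : ℕ} (σ : SG n) : ℕ :=
  (Finset.univ.filter fun p : Fin (n + 1) × Fin (n + 1) => p.1 < p.2 ∧ σ p.2 < σ p.1).card

/-- The left weak Bruhat order on `S_{n+1}`. -/
def leL {n : ℕ} (σ ρ : SG n) : Prop := ∃ γ, ρ = γ * σ ∧ len ρ = len σ + len γ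

/-- Left descent set. -/
def DesL {n : ℕ} (σ : SG n) : Set (Fin n) := {i | len (sgen i * σ) < len σ}

/-- Right descent set. -/
def DesR {n : ℕ} (σ : SG n) : Set (Fin n) := {i | len (σ * sgen i) < len σ}

/-- The longest element `w₀` of `S_{n+1}`. -/
def w0 {n : ℕ} : SG n := ⟨Fin.rev, Fin.rev, Fin.rev_rev, Fin.rev_rev⟩

lemma len_one {n : ℕ} : len (1 : SG n) = 0 := by
  unfold len
  rw [Finset.card_eq_zero, Finset.eq_empty_iff_forall_notMem]
  rintro p hp
  rw [Finset.mem_filter] at hp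
  obtain ⟨-, h1, h2⟩ := hp
  simp only [Equiv.Perm.one_apply] at h2
  exact absurd (h1.trans h2) (lt_irrefl _)

lemma leL_refl {n : ℕ} (σ : SG n) : leL σ σ :=
  ⟨1, (one_mul σ).symm, by simp [len_one]⟩

/-- The defining relations of the 0-Hecke algebra `H_{n+1}(0)`. -/
inductive HRel (n : ℕ) : FreeAlgebra ℂ (Fin n) → FreeAlgebra ℂ (Fin n) → Prop
  | idem (i : Fin n) :
      HRel n (FreeAlgebra.ι ℂ i * FreeAlgebra.ι ℂ i) (FreeAlgebra.ι ℂ i)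
  | braid (i j : Fin n) (h : (i : ℕ) + 1 = j) :
      HRel n (FreeAlgebra.ι ℂ i * FreeAlgebra.ι ℂ j * FreeAlgebra.ι ℂ i)
             (FreeAlgebra.ι ℂ j * FreeAlgebra.ι ℂ i * FreeAlgebra.ι ℂ j)
  | comm (i j : Fin n) (h : (i : ℕ) + 2 ≤ j) :
      HRel n (FreeAlgebra.ι ℂ i * FreeAlgebra.ι ℂ j) (FreeAlgebra.ι ℂ j * FreeAlgebra.ι ℂ i)

/-- The 0-Hecke algebra `H_{n+1}(0)` over `ℂ`. -/
abbrev Hecke (n : ℕ) := RingQuot (HRel n)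

/-- The generator `π_{i+1}` of the 0-Hecke algebra. -/
def hpi {n : ℕ} (i : Fin n) : Hecke n :=
  RingQuot.mkAlgHom ℂ (HRel n) (FreeAlgebra.ι ℂ i)

/-- The element `π̄_{i+1} = π_{i+1} - 1`. -/
def hpibar {n : ℕ} (i : Fin n) : Hecke n := hpi i - 1

/-- `l` is a reduced word for `σ`. -/
def IsReducedWord {n : ℕ} (l : List (Fin n)) (σ : SG n) : Prop :=
  (l.map sgen).prod = σ ∧ l.length = len σ

/-- `π_σ`, the product of the generators `π_i` along a reduced word for `σ`. -/
noncomputable def piPerm {n : ℕ} (σ : SG n) : Hecke n :=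
  if h : ∃ l : List (Fin n), IsReducedWord l σ then ((h.choose.map hpi).prod) else 0

/-- `π̄_σ`, the product of the elements `π̄_i` along a reduced word for `σ`. -/
noncomputable def pibarPerm {n : ℕ} (σ : SG n) : Hecke n :=
  if h : ∃ l : List (Fin n), IsReducedWord l σ then ((h.choose.map hpibar).prod) else 0

/-- The left weak Bruhat interval `[σ,ρ]_L`. -/
abbrev Itv {n : ℕ} (σ ρ : SG n) := {γ : SG n // leL σ γ ∧ leL γ ρ}

/-- The action of the generator `π_{i+1}` on a basis element of `ℂ[σ,ρ]_L`. -/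
noncomputable def bpiFun {n : ℕ} (σ ρ : SG n) (i : Fin n) (γ : Itv σ ρ) :
    Itv σ ρ →₀ ℂ :=
  if i ∈ DesL γ.1 then Finsupp.single γ 1
  else if h : leL σ (sgen i * γ.1) ∧ leL (sgen i * γ.1) ρ then
    Finsupp.single ⟨sgen i * γ.1, h⟩ 1
  else 0

/-- The operator `𝛑_i` on `ℂ[σ,ρ]_L` (the action of `π_{i+1}` on `B(σ,ρ)`). -/
noncomputable def bpi {n : ℕ} (σ ρ : SG n) (i : Fin n) :
    (Itv σ ρ →₀ ℂ) →ₗ[ℂ] (Itv σ ρ →₀ ℂ) :=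
  Finsupp.lift _ ℂ _ (bpiFun σ ρ i)

/-- The action of `π̄_{i+1}` on a basis element of the module `B̄(σ,ρ)`. -/
noncomputable def bbarFun {n : ℕ} (σ ρ : SG n) (i : Fin n) (γ : Itv σ ρ) :
    Itv σ ρ →₀ ℂ :=
  if i ∈ DesL γ.1 then -Finsupp.single γ 1
  else if h : leL σ (sgen i * γ.1) ∧ leL (sgen i * γ.1) ρ then
    Finsupp.single ⟨sgen i * γ.1, h⟩ 1
  else 0

/-- The operator giving the action of `π̄_{i+1}` on `B̄(σ,ρ)`. -/
noncomputable def bbar {n : ℕ} (σ ρ : SG n) (i : Fin n) :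
    (Itv σ ρ →₀ ℂ) →ₗ[ℂ] (Itv σ ρ →₀ ℂ) :=
  Finsupp.lift _ ℂ _ (bbarFun σ ρ i)

section Length

variable {n : ℕ}

lemma sgen_lt_sgen_iff (i : Fin n) {a b : Fin (n + 1)}
    (h₁ : ¬(a = i.castSucc ∧ b = i.succ)) (h₂ : ¬(a = i.succ ∧ b = i.castSucc)) :
    sgen i a < sgen i b ↔ a < b := by
  simp only [not_and, Fin.ext_iff] at h₁ h₂
  rw [sgen, Equiv.swap_apply_def, Equiv.swap_apply_def]
  split_ifs <;> simp only [Fin.lt_def, Fin.ext_iff, Fin.val_succ, Fin.val_castSucc] at * <;> omega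

def inversions (σ : SG n) : Finset (Fin (n + 1) × Fin (n + 1)) :=
  Finset.univ.filter fun p => p.1 < p.2 ∧ σ p.2 < σ p.1

lemma len_eq_card_inversions (σ : SG n) : len σ = (inversions σ).card := rfl

lemma inversions_sgen_mul {i : Fin n} {σ : SG n} (h : σ⁻¹ i.castSucc < σ⁻¹ i.succ) :
    inversions (sgen i * σ) = insert (σ⁻¹ i.castSucc, σ⁻¹ i.succ) (inversions σ) := by
  ext ⟨p, q⟩
  rw [inversions, inversions, Finset.mem_insert, Finset.mem_filter, Finset.mem_filter]
  simp only [Finset.mem_univ, true_and, Equiv.Perm.mul_apply, Prod.mk.injEq,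
    Equiv.Perm.eq_inv_iff_eq]
  by_cases hpq : σ p = i.castSucc ∧ σ q = i.succ
  · refine iff_of_true ⟨?_, ?_⟩ (Or.inl hpq)
    · rwa [Equiv.Perm.inv_eq_iff_eq.mpr hpq.1.symm, Equiv.Perm.inv_eq_iff_eq.mpr hpq.2.symm] at h
    · rw [hpq.1, hpq.2, sgen, Equiv.swap_apply_left, Equiv.swap_apply_right]
      exact Fin.castSucc_lt_succ
  · rw [or_iff_right hpq]
    refine and_congr_right fun hlt => sgen_lt_sgen_iff i (fun ⟨hq, hp⟩ => ?_) (hpq ∘ And.symm)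
    rw [Equiv.Perm.inv_eq_iff_eq.mpr hq.symm, Equiv.Perm.inv_eq_iff_eq.mpr hp.symm] at h
    exact h.asymm hlt

lemma inv_castSucc_ne_inv_succ (σ : SG n) (i : Fin n) : σ⁻¹ i.castSucc ≠ σ⁻¹ i.succ :=
  σ⁻¹.injective.ne Fin.castSucc_lt_succ.ne

lemma sgen_mul_sgen_mul (i : Fin n) (σ : SG n) : sgen i * (sgen i * σ) = σ := by
  rw [← mul_assoc, sgen, Equiv.swap_mul_self, one_mul]

lemma inv_sgen_mul_apply (i : Fin n) (σ : SG n) (p : Fin (n + 1)) :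
    (sgen i * σ)⁻¹ p = σ⁻¹ (sgen i p) := by
  rw [mul_inv_rev, Equiv.Perm.mul_apply, sgen, Equiv.swap_inv]

lemma len_sgen_mul_of_lt {i : Fin n} {σ : SG n} (h : σ⁻¹ i.castSucc < σ⁻¹ i.succ) :
    len (sgen i * σ) = len σ + 1 := by
  rw [len_eq_card_inversions, len_eq_card_inversions, inversions_sgen_mul h,
    Finset.card_insert_of_notMem]
  simp [inversions, Fin.castSucc_lt_succ.le]

lemma len_sgen_mul_of_gt {i : Fin n} {σ : SG n} (h : σ⁻¹ i.succ < σ⁻¹ i.castSucc) :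
    len (sgen i * σ) + 1 = len σ := by
  have h' : (sgen i * σ)⁻¹ i.castSucc < (sgen i * σ)⁻¹ i.succ := by
    simpa [inv_sgen_mul_apply, sgen] using h
  simpa [sgen_mul_sgen_mul] using (len_sgen_mul_of_lt h').symm

lemma len_sgen_mul_le (i : Fin n) (σ : SG n) : len (sgen i * σ) ≤ len σ + 1 := by
  rcases (inv_castSucc_ne_inv_succ σ i).lt_or_gt with h | h
  · exact (len_sgen_mul_of_lt h).le
  · have := len_sgen_mul_of_gt h
    omega

lemma exists_inv_succ_lt_inv_castSucc {σ : SG n} (h : σ ≠ 1) :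
    ∃ i : Fin n, σ⁻¹ i.succ < σ⁻¹ i.castSucc := by
  by_contra! hmono
  have hσ : StrictMono ⇑σ⁻¹ := Fin.strictMono_iff_lt_succ.mpr fun i =>
    (hmono i).lt_of_ne (inv_castSucc_ne_inv_succ σ i)
  exact h (inv_eq_one.mp (Equiv.ext (congrFun hσ.eq_id)))

lemma exists_isReducedWord (σ : SG n) : ∃ l, IsReducedWord l σ := by
  induction hk : len σ using Nat.strong_induction_on generalizing σ with
  | _ k ih =>
    by_cases h1 : σ = 1
    · exact ⟨[], by simp [IsReducedWord, h1, len_one]⟩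
    obtain ⟨i, hi⟩ := exists_inv_succ_lt_inv_castSucc h1
    have hlen := len_sgen_mul_of_gt hi
    obtain ⟨l, hprod, hl⟩ := ih _ (by omega) (sgen i * σ) rfl
    exact ⟨i :: l, by simp [hprod, sgen_mul_sgen_mul], by simp [hl]; omega⟩

end Length

section SortDesc

variable {α : Type*} [LinearOrder α] {n : ℕ}

def sortDescAt (i : Fin n) (f : Fin (n + 1) → α) : Fin (n + 1) → α := fun p =>
  if p = i.castSucc then max (f i.castSucc) (f i.succ)
  else if p = i.succ then min (f i.castSucc) (f i.succ)
  else f p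

lemma sortDescAt_idem (i : Fin n) (f : Fin (n + 1) → α) :
    sortDescAt i (sortDescAt i f) = sortDescAt i f := by
  funext p
  simp only [sortDescAt, if_neg Fin.castSucc_lt_succ.ne']
  split_ifs <;> simp

lemma sortDescAt_braid {i j : Fin n} (hij : (i : ℕ) + 1 = j) (f : Fin (n + 1) → α) :
    sortDescAt i (sortDescAt j (sortDescAt i f)) =
      sortDescAt j (sortDescAt i (sortDescAt j f)) := by
  have hb : i.succ = j.castSucc := Fin.ext (by simp [hij])
  have h₁ : i.castSucc ≠ j.castSucc := by simp [Fin.ext_iff]; omega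
  have h₂ : i.castSucc ≠ j.succ := by simp [Fin.ext_iff]; omega
  funext p
  simp only [sortDescAt, hb, if_neg h₁, if_neg h₂, if_neg h₁.symm, if_neg h₂.symm,
    if_neg Fin.castSucc_lt_succ.ne, if_neg Fin.castSucc_lt_succ.ne']
  split_ifs <;> grind

lemma sortDescAt_comm {i j : Fin n} (hij : (i : ℕ) + 2 ≤ j) (f : Fin (n + 1) → α) :
    sortDescAt i (sortDescAt j f) = sortDescAt j (sortDescAt i f) := by
  have h₁ : i.castSucc ≠ j.castSucc := by simp [Fin.ext_iff]; omega
  have h₂ : i.castSucc ≠ j.succ := by simp [Fin.ext_iff]; omega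
  have h₃ : i.succ ≠ j.castSucc := by simp [Fin.ext_iff]; omega
  have h₄ : i.succ ≠ j.succ := by simp [Fin.ext_iff]; omega
  funext p
  simp only [sortDescAt, if_neg h₁, if_neg h₂, if_neg h₃, if_neg h₄, if_neg h₁.symm,
    if_neg h₂.symm, if_neg h₃.symm, if_neg h₄.symm]
  split_ifs <;> simp_all

end SortDesc

section Demazure

variable {n : ℕ}

-- By `len_sgen_mul_of_lt`, the condition says that `s_i γ` is longer than `γ`.
def demazureMul (i : Fin n) (γ : SG n) : SG n :=
  if γ⁻¹ i.castSucc < γ⁻¹ i.succ then sgen i * γ else γ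

lemma coe_inv_demazureMul (i : Fin n) (γ : SG n) :
    ⇑(demazureMul i γ)⁻¹ = sortDescAt i ⇑γ⁻¹ := by
  funext p
  unfold demazureMul sortDescAt
  by_cases h : γ⁻¹ i.castSucc < γ⁻¹ i.succ
  · rw [if_pos h, inv_sgen_mul_apply]
    split_ifs with h₁ h₂
    · rw [h₁, max_eq_right h.le, sgen, Equiv.swap_apply_left]
    · rw [h₂, min_eq_left h.le, sgen, Equiv.swap_apply_right]
    · rw [sgen, Equiv.swap_apply_of_ne_of_ne h₁ h₂]
  · rw [if_neg h]
    rw [not_lt] at h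
    split_ifs with h₁ h₂
    · rw [h₁, max_eq_left h]
    · rw [h₂, min_eq_right h]
    · rfl

lemma coe_inv_injective : Function.Injective fun γ : SG n => ⇑γ⁻¹ :=
  DFunLike.coe_injective.comp inv_injective

lemma demazureMul_comp_self (i : Fin n) : demazureMul i ∘ demazureMul i = demazureMul i :=
  funext fun γ => coe_inv_injective <| by
    simp only [Function.comp_apply, coe_inv_demazureMul, sortDescAt_idem]

lemma demazureMul_braid {i j : Fin n} (hij : (i : ℕ) + 1 = j) :
    demazureMul i ∘ demazureMul j ∘ demazureMul i =
      demazureMul j ∘ demazureMul i ∘ demazureMul j :=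
  funext fun γ => coe_inv_injective <| by
    simp only [Function.comp_apply, coe_inv_demazureMul, sortDescAt_braid hij]

lemma demazureMul_comm {i j : Fin n} (hij : (i : ℕ) + 2 ≤ j) :
    demazureMul i ∘ demazureMul j = demazureMul j ∘ demazureMul i :=
  funext fun γ => coe_inv_injective <| by
    simp only [Function.comp_apply, coe_inv_demazureMul, sortDescAt_comm hij]

end Demazure

section RegularRepresentation

variable {n : ℕ}

lemma len_demazureMul_le (i : Fin n) (γ : SG n) : len (demazureMul i γ) ≤ len γ + 1 := by
  unfold demazureMul
  split_ifs
  · exact len_sgen_mul_le i γ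
  · omega

lemma demazureMul_of_len_sgen_mul {i : Fin n} {γ : SG n} (h : len (sgen i * γ) = len γ + 1) :
    demazureMul i γ = sgen i * γ := by
  refine if_pos ((not_lt.mp fun hgt => ?_).lt_of_ne (inv_castSucc_ne_inv_succ γ i))
  have := len_sgen_mul_of_gt hgt
  omega

def regularRep : Hecke n →ₐ[ℂ] Module.End ℂ (SG n →₀ ℂ) :=
  RingQuot.liftAlgHom ℂ ⟨FreeAlgebra.lift ℂ fun i => Finsupp.lmapDomain ℂ ℂ (demazureMul i), by
    rintro _ _ (⟨i⟩ | ⟨i, j, hij⟩ | ⟨i, j, hij⟩) <;>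
      simp only [map_mul, FreeAlgebra.lift_ι_apply, Module.End.mul_eq_comp,
        ← Finsupp.lmapDomain_comp]
    · rw [demazureMul_comp_self]
    · rw [Function.comp_assoc, Function.comp_assoc, demazureMul_braid hij]
    · rw [demazureMul_comm hij]⟩

lemma regularRep_hpi (i : Fin n) :
    regularRep (hpi i) = Finsupp.lmapDomain ℂ ℂ (demazureMul i) := by
  rw [hpi, regularRep, RingQuot.liftAlgHom_mkAlgHom_apply, FreeAlgebra.lift_ι_apply]

lemma regularRep_hpi_single {i : Fin n} {γ : SG n} (h : len (sgen i * γ) = len γ + 1) :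
    regularRep (hpi i) (Finsupp.single γ 1) = Finsupp.single (sgen i * γ) 1 := by
  rw [regularRep_hpi, Finsupp.lmapDomain_apply, Finsupp.mapDomain_single,
    demazureMul_of_len_sgen_mul h]

lemma regularRep_hpibar_apply (i : Fin n) (v : SG n →₀ ℂ) :
    regularRep (hpibar i) v = regularRep (hpi i) v - v := by
  rw [hpibar, map_sub, map_one, LinearMap.sub_apply, Module.End.one_apply]

def supportedLenLT (k : ℕ) : Submodule ℂ (SG n →₀ ℂ) :=
  Finsupp.supported ℂ ℂ {γ | len γ < k}

lemma lmapDomain_demazureMul_mem {i : Fin n} {k : ℕ} {v : SG n →₀ ℂ}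
    (hv : v ∈ supportedLenLT k) :
    Finsupp.lmapDomain ℂ ℂ (demazureMul i) v ∈ supportedLenLT (k + 1) := by
  have hmap := Submodule.mem_map_of_mem (f := Finsupp.lmapDomain ℂ ℂ (demazureMul i)) hv
  rw [supportedLenLT, Finsupp.lmapDomain_supported] at hmap
  refine Finsupp.supported_mono ?_ hmap
  rintro _ ⟨γ, hγ, rfl⟩
  exact (len_demazureMul_le i γ).trans_lt (Nat.succ_lt_succ hγ)

lemma regularRep_prod_hpi_mem (l : List (Fin n)) {k : ℕ} {v : SG n →₀ ℂ}
    (hv : v ∈ supportedLenLT k) :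
    regularRep (l.map hpi).prod v ∈ supportedLenLT (k + l.length) := by
  induction l with
  | nil => simpa using hv
  | cons i l ih =>
    rw [List.map_cons, List.prod_cons, map_mul, Module.End.mul_apply, regularRep_hpi,
      List.length_cons, ← add_assoc]
    exact lmapDomain_demazureMul_mem ih

end RegularRepresentation

section Words

variable {n : ℕ}

lemma len_prod_sgen_mul_le (l : List (Fin n)) (δ : SG n) :
    len ((l.map sgen).prod * δ) ≤ l.length + len δ := by
  induction l with
  | nil => simp
  | cons i l ih =>
    rw [List.map_cons, List.prod_cons, mul_assoc, List.length_cons]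
    have := len_sgen_mul_le i ((l.map sgen).prod * δ)
    omega

lemma regularRep_prod_hpi_single (l : List (Fin n)) (δ : SG n)
    (h : len ((l.map sgen).prod * δ) = l.length + len δ) :
    regularRep (l.map hpi).prod (Finsupp.single δ 1) =
      Finsupp.single ((l.map sgen).prod * δ) 1 := by
  induction l with
  | nil => simp
  | cons i l ih =>
    simp only [List.map_cons, List.prod_cons, mul_assoc, List.length_cons] at h ⊢
    have hle := len_prod_sgen_mul_le l δ
    have hstep := len_sgen_mul_le i ((l.map sgen).prod * δ)
    rw [map_mul, Module.End.mul_apply, ih (by omega), regularRep_hpi_single (by omega)]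

lemma regularRep_prod_hpibar_single_one_sub_mem (l : List (Fin n))
    (h : len (l.map sgen).prod = l.length) :
    regularRep (l.map hpibar).prod (Finsupp.single 1 1) - Finsupp.single (l.map sgen).prod 1 ∈
      supportedLenLT l.length := by
  induction l with
  | nil => simp
  | cons i l ih =>
    simp only [List.map_cons, List.prod_cons, List.length_cons] at h ⊢
    set X := (l.map sgen).prod
    have hle : len X ≤ l.length := by simpa [len_one] using len_prod_sgen_mul_le l 1
    have hstep := len_sgen_mul_le i X
    have hX : len X = l.length := by omega
    set r := regularRep (l.map hpibar).prod (Finsupp.single 1 1) - Finsupp.single X 1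
    have hexpand : regularRep (hpibar i * (l.map hpibar).prod) (Finsupp.single 1 1) -
        Finsupp.single (sgen i * X) 1 =
          Finsupp.lmapDomain ℂ ℂ (demazureMul i) r - r - Finsupp.single X 1 := by
      have hr : regularRep (l.map hpibar).prod (Finsupp.single 1 1) = r + Finsupp.single X 1 :=
        (sub_add_cancel _ _).symm
      rw [map_mul, Module.End.mul_apply, hr, regularRep_hpibar_apply, map_add,
        regularRep_hpi_single (by omega), regularRep_hpi]
      abel
    rw [hexpand]
    refine sub_mem (sub_mem (lmapDomain_demazureMul_mem (ih hX))
      (Finsupp.supported_mono ?_ (ih hX))) (Finsupp.single_mem_supported ℂ 1 ?_)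
    · exact fun γ (hγ : len γ < l.length) => Nat.lt_succ_of_lt hγ
    · exact (hX.trans_lt (Nat.lt_succ_self _) : len X < l.length + 1)

end Words

section PiPerm

variable {n : ℕ}

lemma piPerm_eq (σ : SG n) : piPerm σ = ((exists_isReducedWord σ).choose.map hpi).prod :=
  dif_pos _

lemma pibarPerm_eq (σ : SG n) :
    pibarPerm σ = ((exists_isReducedWord σ).choose.map hpibar).prod :=
  dif_pos _

lemma regularRep_piPerm_single {σ δ : SG n} (h : len (σ * δ) = len σ + len δ) :
    regularRep (piPerm σ) (Finsupp.single δ 1) = Finsupp.single (σ * δ) 1 := by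
  obtain ⟨hprod, hlen⟩ := (exists_isReducedWord σ).choose_spec
  rw [piPerm_eq, regularRep_prod_hpi_single _ δ (by rw [hprod, hlen, h]), hprod]

lemma regularRep_piPerm_single_one (γ : SG n) :
    regularRep (piPerm γ) (Finsupp.single 1 1) = Finsupp.single γ 1 := by
  simpa using regularRep_piPerm_single (σ := γ) (δ := 1) (by rw [mul_one, len_one, add_zero])

lemma regularRep_piPerm_mem (σ : SG n) {k : ℕ} {v : SG n →₀ ℂ} (hv : v ∈ supportedLenLT k) :
    regularRep (piPerm σ) v ∈ supportedLenLT (k + len σ) := by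
  obtain ⟨-, hlen⟩ := (exists_isReducedWord σ).choose_spec
  rw [piPerm_eq, ← hlen]
  exact regularRep_prod_hpi_mem _ hv

lemma regularRep_pibarPerm_single_one_sub_mem (ρ : SG n) :
    regularRep (pibarPerm ρ) (Finsupp.single 1 1) - Finsupp.single ρ 1 ∈
      supportedLenLT (len ρ) := by
  obtain ⟨hprod, hlen⟩ := (exists_isReducedWord ρ).choose_spec
  have key := regularRep_prod_hpibar_single_one_sub_mem _ (by rw [hprod, hlen])
  rwa [hprod, hlen, ← pibarPerm_eq] at key

lemma regularRep_piPerm_mul_pibarPerm_single_one_sub_mem {σ ρ : SG n}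
    (h : len (σ * ρ) = len σ + len ρ) :
    regularRep (piPerm σ * pibarPerm ρ) (Finsupp.single 1 1) - Finsupp.single (σ * ρ) 1 ∈
      supportedLenLT (len (σ * ρ)) := by
  have hlow := regularRep_piPerm_mem σ (regularRep_pibarPerm_single_one_sub_mem ρ)
  rwa [map_sub, regularRep_piPerm_single h, add_comm, ← h, ← Module.End.mul_apply,
    ← map_mul] at hlow

lemma regularRep_sum_smul_piPerm_single_one (c : SG n → ℂ) :
    regularRep (∑ γ, c γ • piPerm γ) (Finsupp.single 1 1) = Finsupp.equivFunOnFinite.symm c := by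
  ext τ
  simp [LinearMap.sum_apply, regularRep_piPerm_single_one, Finsupp.single_apply]

end PiPerm

/-- If `ℓ(σρ) = ℓ(σ) + ℓ(ρ)`, then in any expansion of `π_σ π̄_ρ` in the basis
`{π_γ : γ ∈ S_n}`, the coefficient of `π_{σρ}` is `1` and `σρ` is the unique element of
maximal length among the `γ` whose coefficient is nonzero. -/
theorem stmt1 (n : ℕ) (σ ρ : SG n) (h : len (σ * ρ) = len σ + len ρ)
    (c : SG n → ℂ) (hc : piPerm σ * pibarPerm ρ = ∑ γ : SG n, c γ • piPerm γ) :
    c (σ * ρ) = 1 ∧ ∀ γ : SG n, c γ ≠ 0 → γ ≠ σ * ρ → len γ < len (σ * ρ) := by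
  have hlow := regularRep_piPerm_mul_pibarPerm_single_one_sub_mem h
  rw [hc, regularRep_sum_smul_piPerm_single_one] at hlow
  have hc_eq : ∀ γ, ¬len γ < len (σ * ρ) → c γ - Finsupp.single (σ * ρ) 1 γ = 0 := by
    simpa using (Finsupp.mem_supported' ℂ _).mp hlow
  refine ⟨?_, fun γ hγ hne => ?_⟩
  · simpa [sub_eq_zero] using hc_eq (σ * ρ) (lt_irrefl _)
  · by_contra hlen
    simpa [Finsupp.single_eq_of_ne hne, hγ] using hc_eq γ hlen

end
end

section
/- For any m-element subset J of [m+n], the set of permutations γ ∈ S_{m+n} with γ^{-1}([1,m]) = J equals the left weak Bruhat interval [perm_J, perm^J]_L. -/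
open scoped Classical

noncomputable section

/-- `perm_J`: the permutation sending the `k`-th smallest element of `J` to `k` and the
`s`-th smallest element of the complement of `J` to `m + s` (0-indexed). -/
noncomputable def permJdown {N : ℕ} (m : ℕ) (hm : m ≤ N + 1) (J : Finset (Fin (N + 1)))
    (hJ : J.card = m) : SG N :=
  (Equiv.sumCompl (· ∈ J)).symm.trans
    ((Equiv.sumCongr (J.orderIsoOfFin hJ).toEquiv.symm
        ((Equiv.subtypeEquivRight (fun x => (Finset.mem_compl (a := x)).symm)).trans
          (Jᶜ.orderIsoOfFin (by
              rw [Finset.card_compl, hJ, Fintype.card_fin])).toEquiv.symm)).trans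
      (finSumFinEquiv.trans (finCongr (by omega))))

/-- `perm^J`: the permutation sending the `k`-th smallest element of `J` to `m - k + 1` and
the `s`-th smallest element of the complement of `J` to `m + n - s + 1` (here 0-indexed:
each block is reversed). -/
noncomputable def permJup {N : ℕ} (m : ℕ) (hm : m ≤ N + 1) (J : Finset (Fin (N + 1)))
    (hJ : J.card = m) : SG N :=
  (Equiv.sumCompl (· ∈ J)).symm.trans
    ((Equiv.sumCongr ((J.orderIsoOfFin hJ).toEquiv.symm.trans
          (Fin.revPerm : Equiv.Perm (Fin m)))
        (((Equiv.subtypeEquivRight (fun x => (Finset.mem_compl (a := x)).symm)).trans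
          (Jᶜ.orderIsoOfFin (by
              rw [Finset.card_compl, hJ, Fintype.card_fin])).toEquiv.symm).trans
          (Fin.revPerm : Equiv.Perm (Fin (N + 1 - m))))).trans
      (finSumFinEquiv.trans (finCongr (by omega))))

/-!
Record a permutation by its inversion set `Inv σ = {(a, b) | a < b, σ b < σ a}`, whose size is
its length. Transporting pairs along `σ` shows `len (ρ σ⁻¹) = #(Inv ρ \ Inv σ) + #(Inv σ \ Inv ρ)`,
so `len ρ = len σ + len (ρ σ⁻¹)` holds exactly when `Inv σ ⊆ Inv ρ`: the left weak order is
inclusion of inversion sets. A permutation `γ` has `γ⁻¹([1,m]) = J` iff it sends `J` below its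
complement, i.e. iff every pair `a < b` with `a ∉ J`, `b ∈ J` is an inversion of `γ` and no pair
with `a ∈ J`, `b ∉ J` is. Since `perm_J` is increasing and `perm^J` decreasing on `J` and on its
complement, these two conditions say `Inv perm_J ⊆ Inv γ ⊆ Inv perm^J`.
-/

lemma card_compl_eq_sub {n m : ℕ} {J : Finset (Fin n)} (hJ : J.card = m) : Jᶜ.card = n - m := by
  rw [Finset.card_compl, hJ, Fintype.card_fin]

def MapsBelowCompl {α β : Type*} [LT β] (f : α → β) (J : Finset α) : Prop :=
  ∀ x ∈ J, ∀ y ∉ J, f x < f y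

lemma mapsBelowCompl_iff_val_lt_iff_mem {n m : ℕ} (γ : Equiv.Perm (Fin n)) {J : Finset (Fin n)}
    (hJ : J.card = m) : MapsBelowCompl γ J ↔ ∀ x, (γ x : ℕ) < m ↔ x ∈ J := by
  refine ⟨fun h x => ⟨fun hx => ?_, fun hx => ?_⟩, fun h x hx y hy => ?_⟩
  · by_contra hxJ
    have hsub : J.image γ ⊆ Finset.Iio (γ x) := by
      simpa [Finset.subset_iff] using fun y hy => h y hy x hxJ
    have := Finset.card_le_card hsub
    rw [Finset.card_image_of_injective _ γ.injective, Fin.card_Iio] at this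
    omega
  · have hsub : Jᶜ.image γ ⊆ Finset.Ioi (γ x) := by
      simpa [Finset.subset_iff] using fun y hy => h x hx y hy
    have := Finset.card_le_card hsub
    rw [Finset.card_image_of_injective _ γ.injective, card_compl_eq_sub hJ, Fin.card_Ioi] at this
    omega
  · have := (h x).mpr hx
    have := mt (h y).mp hy
    rw [Fin.lt_def]
    omega

namespace SG

variable {n : ℕ}

def invSet (σ : SG n) : Finset (Fin (n + 1) × Fin (n + 1)) :=
  Finset.univ.filter fun p => p.1 < p.2 ∧ σ p.2 < σ p.1

lemma mem_invSet {σ : SG n} {p : Fin (n + 1) × Fin (n + 1)} :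
    p ∈ invSet σ ↔ p.1 < p.2 ∧ σ p.2 < σ p.1 := by
  simp [invSet]

lemma len_eq_card_invSet (σ : SG n) : len σ = (invSet σ).card := rfl

lemma len_mul_inv (σ ρ : SG n) :
    len (ρ * σ⁻¹) = (invSet ρ \ invSet σ).card + (invSet σ \ invSet ρ).card := by
  set E := Finset.univ.filter fun p : Fin (n + 1) × Fin (n + 1) => σ p.1 < σ p.2 ∧ ρ p.2 < ρ p.1
  have hE : E.card = len (ρ * σ⁻¹) := by
    rw [len_eq_card_invSet]
    exact Finset.card_equiv (σ.prodCongr σ) fun p => by simp [E, mem_invSet]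
  have hlt : (E.filter fun p => p.1 < p.2) = invSet ρ \ invSet σ := by
    ext ⟨a, b⟩
    simp only [E, Finset.mem_filter, Finset.mem_sdiff, mem_invSet, Finset.mem_univ, true_and]
    grind [Equiv.apply_eq_iff_eq]
  have hgt : (E.filter fun p => ¬ p.1 < p.2).card = (invSet σ \ invSet ρ).card := by
    refine Finset.card_equiv (Equiv.prodComm _ _) fun ⟨a, b⟩ => ?_
    simp only [E, Finset.mem_filter, Finset.mem_sdiff, mem_invSet, Finset.mem_univ, true_and,
      Equiv.prodComm_apply, Prod.fst_swap, Prod.snd_swap]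
    grind [Equiv.apply_eq_iff_eq]
  rw [← hE, ← Finset.card_filter_add_card_filter_not (fun p => p.1 < p.2), hlt, hgt]

lemma leL_iff_len_eq (σ ρ : SG n) : leL σ ρ ↔ len ρ = len σ + len (ρ * σ⁻¹) := by
  refine ⟨?_, fun h => ⟨ρ * σ⁻¹, by group, h⟩⟩
  rintro ⟨γ, rfl, h⟩
  simpa using h

lemma leL_iff_invSet_subset (σ ρ : SG n) : leL σ ρ ↔ invSet σ ⊆ invSet ρ := by
  rw [leL_iff_len_eq, len_mul_inv, len_eq_card_invSet, len_eq_card_invSet,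
    ← Finset.sdiff_eq_empty_iff_subset, ← Finset.card_eq_zero,
    ← Finset.card_inter_add_card_sdiff (invSet σ) (invSet ρ),
    ← Finset.card_inter_add_card_sdiff (invSet ρ) (invSet σ), Finset.inter_comm]
  omega

lemma mem_invSet_of_strictMonoOn {σ : SG n} {J : Finset (Fin (n + 1))}
    (hσ : MapsBelowCompl σ J) (hJ : StrictMonoOn σ J) (hJc : StrictMonoOn σ (↑Jᶜ : Set _))
    {p : Fin (n + 1) × Fin (n + 1)} : p ∈ invSet σ ↔ p.1 < p.2 ∧ p.1 ∉ J ∧ p.2 ∈ J := by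
  obtain ⟨a, b⟩ := p
  refine mem_invSet.trans (and_congr_right fun hab => ?_)
  by_cases ha : a ∈ J <;> by_cases hb : b ∈ J
  · simpa [ha, hb] using (hJ ha hb hab).le
  · simpa [ha, hb] using (hσ a ha b hb).le
  · simpa [ha, hb] using hσ b hb a ha
  · simpa [ha, hb] using (hJc (by simpa using ha) (by simpa using hb) hab).le

lemma mem_invSet_of_strictAntiOn {σ : SG n} {J : Finset (Fin (n + 1))}
    (hσ : MapsBelowCompl σ J) (hJ : StrictAntiOn σ J) (hJc : StrictAntiOn σ (↑Jᶜ : Set _))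
    {p : Fin (n + 1) × Fin (n + 1)} : p ∈ invSet σ ↔ p.1 < p.2 ∧ (p.1 ∈ J → p.2 ∈ J) := by
  obtain ⟨a, b⟩ := p
  refine mem_invSet.trans (and_congr_right fun hab => ?_)
  by_cases ha : a ∈ J <;> by_cases hb : b ∈ J
  · simpa [ha, hb] using hJ ha hb hab
  · simpa [ha, hb] using (hσ a ha b hb).le
  · simpa [ha, hb] using hσ b hb a ha
  · simpa [ha, hb] using hJc (by simpa using ha) (by simpa using hb) hab

end SG

section permJ

variable {N m : ℕ} (hm : m ≤ N + 1) {J : Finset (Fin (N + 1))} (hJ : J.card = m)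

lemma permJdown_val_of_mem {x : Fin (N + 1)} (hx : x ∈ J) :
    (permJdown m hm J hJ x : ℕ) = (J.orderIsoOfFin hJ).symm ⟨x, hx⟩ := by
  simp [permJdown, Equiv.sumCompl_symm_apply_of_pos hx]

lemma permJdown_val_of_notMem {x : Fin (N + 1)} (hx : x ∉ J) :
    (permJdown m hm J hJ x : ℕ) =
      m + (Jᶜ.orderIsoOfFin (card_compl_eq_sub hJ)).symm ⟨x, Finset.mem_compl.mpr hx⟩ := by
  simp [permJdown, Equiv.sumCompl_symm_apply_of_neg hx, Equiv.subtypeEquivRight]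
  rfl

lemma permJup_val_of_mem {x : Fin (N + 1)} (hx : x ∈ J) :
    (permJup m hm J hJ x : ℕ) = ((J.orderIsoOfFin hJ).symm ⟨x, hx⟩).rev := by
  simp [permJup, Equiv.sumCompl_symm_apply_of_pos hx]

lemma permJup_val_of_notMem {x : Fin (N + 1)} (hx : x ∉ J) :
    (permJup m hm J hJ x : ℕ) =
      m + ((Jᶜ.orderIsoOfFin (card_compl_eq_sub hJ)).symm ⟨x, Finset.mem_compl.mpr hx⟩).rev := by
  simp [permJup, Equiv.sumCompl_symm_apply_of_neg hx, Equiv.subtypeEquivRight]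
  rfl

lemma permJdown_mapsBelowCompl : MapsBelowCompl (permJdown m hm J hJ) J := by
  refine (mapsBelowCompl_iff_val_lt_iff_mem _ hJ).mpr fun x => ?_
  by_cases hx : x ∈ J
  · exact iff_of_true ((permJdown_val_of_mem hm hJ hx).symm ▸ Fin.isLt _) hx
  · simp [permJdown_val_of_notMem hm hJ hx, hx]

lemma permJup_mapsBelowCompl : MapsBelowCompl (permJup m hm J hJ) J := by
  refine (mapsBelowCompl_iff_val_lt_iff_mem _ hJ).mpr fun x => ?_
  by_cases hx : x ∈ J
  · exact iff_of_true ((permJup_val_of_mem hm hJ hx).symm ▸ Fin.isLt _) hx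
  · simp [permJup_val_of_notMem hm hJ hx, hx]

lemma permJdown_strictMonoOn : StrictMonoOn (permJdown m hm J hJ) J := by
  intro x hx y hy hxy
  rw [Fin.lt_def, permJdown_val_of_mem hm hJ hx, permJdown_val_of_mem hm hJ hy, ← Fin.lt_def]
  exact (J.orderIsoOfFin hJ).symm.strictMono (Subtype.mk_lt_mk.mpr hxy)

lemma permJdown_strictMonoOn_compl : StrictMonoOn (permJdown m hm J hJ) (↑Jᶜ : Set _) := by
  intro x hx y hy hxy
  rw [Finset.coe_compl, Set.mem_compl_iff, Finset.mem_coe] at hx hy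
  rw [Fin.lt_def, permJdown_val_of_notMem hm hJ hx, permJdown_val_of_notMem hm hJ hy,
    Nat.add_lt_add_iff_left, ← Fin.lt_def]
  exact (Jᶜ.orderIsoOfFin _).symm.strictMono (Subtype.mk_lt_mk.mpr hxy)

lemma permJup_strictAntiOn : StrictAntiOn (permJup m hm J hJ) J := by
  intro x hx y hy hxy
  rw [Fin.lt_def, permJup_val_of_mem hm hJ hx, permJup_val_of_mem hm hJ hy, ← Fin.lt_def,
    Fin.rev_lt_rev]
  exact (J.orderIsoOfFin hJ).symm.strictMono (Subtype.mk_lt_mk.mpr hxy)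

lemma permJup_strictAntiOn_compl : StrictAntiOn (permJup m hm J hJ) (↑Jᶜ : Set _) := by
  intro x hx y hy hxy
  rw [Finset.coe_compl, Set.mem_compl_iff, Finset.mem_coe] at hx hy
  rw [Fin.lt_def, permJup_val_of_notMem hm hJ hx, permJup_val_of_notMem hm hJ hy,
    Nat.add_lt_add_iff_left, ← Fin.lt_def, Fin.rev_lt_rev]
  exact (Jᶜ.orderIsoOfFin _).symm.strictMono (Subtype.mk_lt_mk.mpr hxy)

lemma mapsBelowCompl_iff_invSet_subset (γ : SG N) :
    MapsBelowCompl γ J ↔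
      SG.invSet (permJdown m hm J hJ) ⊆ SG.invSet γ ∧
        SG.invSet γ ⊆ SG.invSet (permJup m hm J hJ) := by
  simp only [Finset.subset_iff, Prod.forall, SG.mem_invSet,
    SG.mem_invSet_of_strictMonoOn (permJdown_mapsBelowCompl hm hJ) (permJdown_strictMonoOn hm hJ)
      (permJdown_strictMonoOn_compl hm hJ),
    SG.mem_invSet_of_strictAntiOn (permJup_mapsBelowCompl hm hJ) (permJup_strictAntiOn hm hJ)
      (permJup_strictAntiOn_compl hm hJ)]
  refine ⟨fun h => ⟨fun a b ⟨hab, ha, hb⟩ => ⟨hab, h b hb a ha⟩,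
    fun a b ⟨hab, hba⟩ => ⟨hab, fun ha => by_contra fun hb => (h a ha b hb).not_gt hba⟩⟩, ?_⟩
  rintro ⟨hdown, hup⟩ x hx y hy
  rcases lt_trichotomy x y with hxy | rfl | hyx
  · refine (le_of_not_gt fun hyx => hy ((hup x y ⟨hxy, hyx⟩).2 hx)).lt_of_ne ?_
    exact γ.injective.ne hxy.ne
  · exact absurd hx hy
  · exact (hdown y x ⟨hyx, hy, hx⟩).2

end permJ

/-- For an `m`-element subset `J` of the `(N+1)`-element set of positions, the set of
permutations `γ` with `γ⁻¹([1,m]) = J` (i.e. `γ(x)` is among the `m` smallest values exactly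
for `x ∈ J`) is the left weak Bruhat interval `[perm_J, perm^J]_L`. -/
theorem stmt15 (N m : ℕ) (hm : m ≤ N + 1) (J : Finset (Fin (N + 1))) (hJ : J.card = m)
    (γ : SG N) :
    (∀ x : Fin (N + 1), ((γ x : ℕ) < m ↔ x ∈ J)) ↔
      (leL (permJdown m hm J hJ) γ ∧ leL γ (permJup m hm J hJ)) := by
  rw [← mapsBelowCompl_iff_val_lt_iff_mem γ hJ, SG.leL_iff_invSet_subset,
    SG.leL_iff_invSet_subset]
  exact mapsBelowCompl_iff_invSet_subset hm hJ γ

end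
end
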